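/- Let d ≥ 1, r an integer with gcd(r, d) = 1, q a multiple of d, and s, α, β complex numbers with Re(s ± α), Re(s ± β) > 1. Then Σ_{m,n ≥ 1, gcd(mn,q)=1} m^{−s−α} n^{−s−β} cos(2πmnr/d) = (1/φ(d)) Σ_{ψ mod d} τ(conj(ψ))·(ψ(r)+ψ(−r))/2 · L_q(s+α, ψ)·L_q(s+β, ψ), where L_q(s, ψ) = Σ_{n ≥ 1, gcd(n,q)=1} ψ(n) n^{−s}. -/

import Mathlib

open Complex Real

/-- Gauss sum `τ(ψ) = ∑_{a=1}^{d} ψ(a) e(a/d)`. -/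
noncomputable def tauSum {d : ℕ} (ψ : DirichletCharacter ℂ d) : ℂ :=
  ∑ a ∈ Finset.range d, ψ (a : ZMod d) * Complex.exp (2 * Real.pi * Complex.I * a / d)

/-- The `L`-series of `ψ` with the Euler factors at primes dividing `q` removed. -/
noncomputable def Lq (q : ℕ) {d : ℕ} (ψ : DirichletCharacter ℂ d) (w : ℂ) : ℂ :=
  ∑' n : ℕ, if 1 ≤ n ∧ Nat.gcd n q = 1 then ψ (n : ZMod d) * (n : ℂ) ^ (-w) else 0

/-!
For `b` prime to `d`, orthogonality of Dirichlet characters expands the additive character in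
multiplicative ones: `φ(d) e(b/d) = ∑_ψ τ(ψ̄) ψ(b)`. Writing
`cos(2π mnr/d) = (e(mnr/d) + e(-mnr/d))/2` and using `ψ(mnr) = ψ(m) ψ(n) ψ(r)`, each term of the
double series becomes a finite sum over `ψ` of a product of an `m`-term and an `n`-term of the
series defining `L_q`; since these converge absolutely, the double sum splits into the products
`L_q(s + α, ψ) L_q(s + β, ψ)`.
-/

namespace DirichletCharacter

variable {d : ℕ} [NeZero d]

lemma sum_star_apply_mul_apply (a : ZMod d) {b : ZMod d} (hb : IsUnit b) :
    ∑ ψ : DirichletCharacter ℂ d, star ψ a * ψ b = if b = a then (d.totient : ℂ) else 0 := by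
  obtain ⟨u, rfl⟩ := hb
  rw [← sum_char_inv_mul_char_eq ℂ u.isUnit a]
  refine Fintype.sum_equiv (Equiv.inv _) _ _ fun ψ => ?_
  rw [MulChar.star_eq_inv, Equiv.inv_apply, ZMod.inv_coe_unit, MulChar.inv_apply ψ ↑u⁻¹,
    Ring.inverse_unit, inv_inv, mul_comm]

lemma sum_gaussSum_star_mul_apply (e : AddChar (ZMod d) ℂ) {b : ZMod d} (hb : IsUnit b) :
    ∑ ψ : DirichletCharacter ℂ d, gaussSum (star ψ) e * ψ b = d.totient * e b := by
  simp_rw [gaussSum, Finset.sum_mul]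
  rw [Finset.sum_comm]
  simp_rw [mul_right_comm _ (e _), ← Finset.sum_mul, sum_star_apply_mul_apply _ hb, ite_mul,
    zero_mul, Finset.sum_ite_eq, Finset.mem_univ, if_true]

end DirichletCharacter

lemma tauSum_eq_gaussSum {d : ℕ} [NeZero d] (ψ : DirichletCharacter ℂ d) :
    tauSum ψ = gaussSum ψ ZMod.stdAddChar := by
  refine Finset.sum_nbij' (fun a => (a : ZMod d)) ZMod.val (by simp) (by simp [ZMod.val_lt])
    (fun a ha => ZMod.val_cast_of_lt (Finset.mem_range.mp ha)) (fun a _ => ZMod.natCast_zmod_val a)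
    fun a _ => ?_
  rw [ZMod.stdAddChar_apply, ZMod.toCircle_natCast]

lemma cos_eq_inv_totient_mul_sum_tauSum {d : ℕ} [NeZero d] (b : ℤ) (hb : IsUnit (b : ZMod d)) :
    Complex.cos (2 * π * b / d) = (d.totient : ℂ)⁻¹ *
      ∑ ψ : DirichletCharacter ℂ d, tauSum (star ψ) * ((ψ b + ψ (-b)) / 2) := by
  have hφ : (d.totient : ℂ) ≠ 0 := by exact_mod_cast (Nat.totient_pos.mpr (NeZero.pos d)).ne'
  have hexp (j : ℤ) : Complex.exp (2 * π * j / d * I) = ZMod.stdAddChar (j : ZMod d) := by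
    rw [ZMod.stdAddChar_coe]; congr 1; ring
  have hsum : ∑ ψ : DirichletCharacter ℂ d, tauSum (star ψ) * ((ψ b + ψ (-b)) / 2) =
      (d.totient * ZMod.stdAddChar (b : ZMod d) +
        d.totient * ZMod.stdAddChar (-b : ZMod d)) / 2 := by
    rw [← DirichletCharacter.sum_gaussSum_star_mul_apply _ hb,
      ← DirichletCharacter.sum_gaussSum_star_mul_apply _ hb.neg, ← Finset.sum_add_distrib,
      Finset.sum_div]
    exact Finset.sum_congr rfl fun ψ _ => by rw [tauSum_eq_gaussSum]; ring
  rw [hsum, Complex.cos, ← Int.cast_neg, ← hexp, ← hexp]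
  push_cast
  field_simp

lemma tsum_tsum_sum_mul_mul {ι α β K : Type*} [Field K] [TopologicalSpace K] [IsTopologicalRing K]
    [T2Space K] (s : Finset ι) (c : ι → K) {f : ι → α → K} {g : ι → β → K}
    (hf : ∀ i ∈ s, Summable (f i)) (hg : ∀ i ∈ s, Summable (g i)) :
    ∑' a, ∑' b, ∑ i ∈ s, c i * f i a * g i b = ∑ i ∈ s, c i * (∑' a, f i a) * ∑' b, g i b := by
  calc ∑' a, ∑' b, ∑ i ∈ s, c i * f i a * g i b
      = ∑' a, ∑ i ∈ s, c i * f i a * ∑' b, g i b := by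
        refine tsum_congr fun a => ?_
        rw [Summable.tsum_finsetSum fun i hi => (hg i hi).mul_left _]
        simp_rw [tsum_mul_left]
    _ = ∑ i ∈ s, c i * (∑' a, f i a) * ∑' b, g i b := by
        rw [Summable.tsum_finsetSum fun i hi => ((hf i hi).mul_left _).mul_right _]
        simp_rw [tsum_mul_right, tsum_mul_left]

section LqTerm

variable (q : ℕ) {d : ℕ} (ψ : DirichletCharacter ℂ d)

noncomputable def lqTerm (w : ℂ) (n : ℕ) : ℂ :=
  if 1 ≤ n ∧ Nat.gcd n q = 1 then ψ (n : ZMod d) * (n : ℂ) ^ (-w) else 0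

lemma Lq_eq_tsum_lqTerm (w : ℂ) : Lq q ψ w = ∑' n, lqTerm q ψ w n := rfl

variable {q} in
lemma summable_lqTerm {w : ℂ} (hw : 1 < w.re) : Summable (lqTerm q ψ w) := by
  refine Summable.of_norm_bounded (Complex.summable_one_div_nat_cpow.mpr hw).norm fun n => ?_
  rw [lqTerm]
  split_ifs
  · rw [norm_mul, Complex.cpow_neg, ← one_div]
    exact mul_le_of_le_one_left (norm_nonneg _) (ψ.norm_le_one _)
  · simp

lemma lqTerm_mul_lqTerm (w w' : ℂ) (m n : ℕ) :
    lqTerm q ψ w m * lqTerm q ψ w' n =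
      if 1 ≤ m ∧ 1 ≤ n ∧ Nat.gcd (m * n) q = 1 then
        ψ m * ψ n * ((m : ℂ) ^ (-w) * (n : ℂ) ^ (-w')) else 0 := by
  have hcop : Nat.gcd (m * n) q = 1 ↔ Nat.gcd m q = 1 ∧ Nat.gcd n q = 1 :=
    Nat.coprime_mul_iff_left
  simp only [lqTerm, hcop]
  split_ifs <;> first | ring1 | (exfalso; tauto)

end LqTerm

lemma summand_eq_sum_tauSum_mul_lqTerm {q d : ℕ} [NeZero d] (hdq : d ∣ q) {r : ℤ}
    (hr : IsUnit (r : ZMod d)) (w w' : ℂ) (m n : ℕ) :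
    (if 1 ≤ m ∧ 1 ≤ n ∧ Nat.gcd (m * n) q = 1 then
        (m : ℂ) ^ (-w) * (n : ℂ) ^ (-w') * Complex.cos (2 * (π : ℂ) * m * n * r / d) else 0) =
      ∑ ψ : DirichletCharacter ℂ d, (d.totient : ℂ)⁻¹ * (tauSum (star ψ) * ((ψ r + ψ (-r)) / 2)) *
        lqTerm q ψ w m * lqTerm q ψ w' n := by
  simp_rw [mul_assoc _ (lqTerm q _ w m), lqTerm_mul_lqTerm]
  split_ifs with h
  · have hmn : IsUnit ((m * n : ℕ) : ZMod d) :=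
      (ZMod.isUnit_iff_coprime _ _).mpr (Nat.Coprime.coprime_dvd_right hdq h.2.2)
    have hb : IsUnit ((m * n * r : ℤ) : ZMod d) := by push_cast at hmn ⊢; exact hmn.mul hr
    rw [show 2 * (π : ℂ) * m * n * r / d = 2 * π * ((m * n * r : ℤ) : ℂ) / d by push_cast; ring,
      cos_eq_inv_totient_mul_sum_tauSum _ hb, Finset.mul_sum, Finset.mul_sum]
    refine Finset.sum_congr rfl fun ψ _ => ?_
    push_cast
    rw [← mul_neg, map_mul, map_mul, map_mul, map_mul]
    ring
  · simp

theorem double_sum_as_character_sum_general (d q : ℕ) [NeZero d] (hdq : d ∣ q)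
    (r : ℤ) (hr : Int.gcd r d = 1) (s α β : ℂ)
    (h1 : 1 < (s + α).re)
    (h3 : 1 < (s + β).re) :
    (∑' m : ℕ, ∑' n : ℕ,
        if 1 ≤ m ∧ 1 ≤ n ∧ Nat.gcd (m * n) q = 1 then
          (m : ℂ) ^ (-s - α) * (n : ℂ) ^ (-s - β) *
            Complex.cos (2 * (Real.pi : ℂ) * m * n * r / d)
        else 0) =
      (1 / (Nat.totient d : ℂ)) *
        ∑ᶠ ψ : DirichletCharacter ℂ d,
          tauSum (star ψ) * ((ψ (r : ZMod d) + ψ (-(r : ZMod d))) / 2) *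
            Lq q ψ (s + α) * Lq q ψ (s + β) := by
  have hr : IsUnit (r : ZMod d) :=
    .of_mul_eq_one _ (ZMod.coe_int_mul_inv_eq_one (Int.isCoprime_iff_gcd_eq_one.mpr hr))
  simp_rw [← neg_add', summand_eq_sum_tauSum_mul_lqTerm hdq hr,
    tsum_tsum_sum_mul_mul _ _ (fun ψ _ => summable_lqTerm ψ h1) (fun ψ _ => summable_lqTerm ψ h3),
    ← Lq_eq_tsum_lqTerm, finsum_eq_sum_of_fintype, Finset.mul_sum, one_div, mul_assoc]

theorem double_sum_as_character_sum (d q : ℕ) [NeZero d] (hd : 1 ≤ d) (hdq : d ∣ q)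
    (r : ℤ) (hr : Int.gcd r d = 1) (s α β : ℂ)
    (h1 : 1 < (s + α).re) (h2 : 1 < (s - α).re)
    (h3 : 1 < (s + β).re) (h4 : 1 < (s - β).re) :
    (∑' m : ℕ, ∑' n : ℕ,
        if 1 ≤ m ∧ 1 ≤ n ∧ Nat.gcd (m * n) q = 1 then
          (m : ℂ) ^ (-s - α) * (n : ℂ) ^ (-s - β) *
            Complex.cos (2 * (Real.pi : ℂ) * m * n * r / d)
        else 0) =
      (1 / (Nat.totient d : ℂ)) *
        ∑ᶠ ψ : DirichletCharacter ℂ d,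
          tauSum (star ψ) * ((ψ (r : ZMod d) + ψ (-(r : ZMod d))) / 2) *
            Lq q ψ (s + α) * Lq q ψ (s + β) :=
  double_sum_as_character_sum_general d q hdq r hr s α β h1 h3
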